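/- Let r₀ ≤ 0 and let V = {(q,r,s) ∈ ℝ³ : r < r₀}, an open subset of ℝ³. Then Φ restricted to V is injective, its derivative at every point of V is a linear isomorphism of ℝ³, the image Φ(V) is open in ℝ³, and Φ restricted to V is a homeomorphism onto Φ(V) whose inverse is smooth; that is, Φ is a global diffeomorphism from V onto the open set Φ(V). -/

import Mathlib

open Real Set

/-- Lipschitz bound for complex exp on a half-plane. -/
lemma norm_cexp_sub_cexp_le {w w' : ℂ} {m : ℝ} (hw : w.re ≤ m) (hw' : w'.re ≤ m) :
    ‖Complex.exp w - Complex.exp w'‖ ≤ Real.exp m * ‖w - w'‖ := by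
  have hg : ∀ t ∈ Set.Icc (0:ℝ) 1,
      HasDerivWithinAt (fun t : ℝ => Complex.exp (w' + t • (w - w')))
        (Complex.exp (w' + t • (w - w')) * (w - w')) (Set.Icc (0:ℝ) 1) t := by
    intro t _
    have h1 : HasDerivAt (fun t : ℝ => w' + t • (w - w')) (w - w') t := by
      simpa using ((hasDerivAt_id t).smul_const (w - w')).const_add w'
    exact h1.cexp.hasDerivWithinAt
  have bound : ∀ t ∈ Set.Ico (0:ℝ) 1,
      ‖Complex.exp (w' + t • (w - w')) * (w - w')‖ ≤ Real.exp m * ‖w - w'‖ := by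
    intro t ht
    rw [norm_mul]
    gcongr
    rw [Complex.norm_exp]
    apply Real.exp_le_exp.2
    have : (w' + t • (w - w')).re = w'.re + t * (w.re - w'.re) := by
      simp [Complex.add_re, Complex.real_smul, Complex.sub_re]
    rw [this]
    nlinarith [ht.1, ht.2.le, hw, hw']
  have := norm_image_sub_le_of_norm_deriv_le_segment' hg bound 1 (Set.right_mem_Icc.2 zero_le_one)
  simpa using this

/-- Core 2D injectivity estimate for the Gerstner-type map. -/
lemma inj_aux (k c : ℝ) (hk : 0 < k) (hc0 : 0 < c) (hc1 : c ≤ 1)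
    {q r q' r' : ℝ} (hr : k * r < 0) (hr' : k * r' < 0)
    (h1 : q - c / k * Real.exp (k * r) * Real.sin (k * q)
        = q' - c / k * Real.exp (k * r') * Real.sin (k * q'))
    (h2 : r + c / k * Real.exp (k * r) * Real.cos (k * q)
        = r' + c / k * Real.exp (k * r') * Real.cos (k * q')) :
    q = q' ∧ r = r' := by
  set z : ℂ := ⟨q, r⟩
  set z' : ℂ := ⟨q', r'⟩
  set w : ℂ := ⟨k * r, k * q⟩
  set w' : ℂ := ⟨k * r', k * q'⟩
  have hEq : z + (c / k) • (Complex.I * Complex.exp w)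
      = z' + (c / k) • (Complex.I * Complex.exp w') := by
    apply Complex.ext
    · simpa [z, z', w, w', Complex.exp_re, Complex.exp_im, Complex.add_re, Complex.mul_re,
        Complex.real_smul, Complex.ofReal_re, Complex.ofReal_im, mul_comm, mul_assoc,
        mul_left_comm, sub_eq_add_neg] using h1
    · simpa [z, z', w, w', Complex.exp_re, Complex.exp_im, Complex.add_im, Complex.mul_im,
        Complex.real_smul, Complex.ofReal_re, Complex.ofReal_im, mul_comm, mul_assoc,
        mul_left_comm] using h2
  have hsub : z - z' = (c / k) • (Complex.I * (Complex.exp w' - Complex.exp w)) := by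
    simp only [Complex.real_smul] at hEq ⊢
    linear_combination hEq
  have hwsub : w - w' = (k : ℂ) * Complex.I * (starRingEnd ℂ) (z - z') := by
    apply Complex.ext <;>
      simp [z, z', w, w', Complex.mul_re, Complex.mul_im, Complex.sub_re, Complex.sub_im] <;> ring
  have hnw : ‖w - w'‖ = k * ‖z - z'‖ := by
    rw [hwsub, norm_mul, norm_mul, Complex.norm_conj]
    simp [abs_of_pos hk]
  set m : ℝ := max (k * r) (k * r')
  have hm : m < 0 := max_lt hr hr'
  have hexp := norm_cexp_sub_cexp_le (w := w) (w' := w')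
    (by simp [w, m, le_max_left] : w.re ≤ m) (by simp [w', m, le_max_right] : w'.re ≤ m)
  have hnz : ‖z - z'‖ ≤ c * Real.exp m * ‖z - z'‖ := by
    calc ‖z - z'‖ = (c / k) * ‖Complex.I * (Complex.exp w' - Complex.exp w)‖ := by
          rw [hsub, norm_smul, Real.norm_eq_abs, abs_of_pos (div_pos hc0 hk)]
      _ = (c / k) * ‖Complex.exp w - Complex.exp w'‖ := by
          rw [norm_mul, Complex.norm_I, one_mul, norm_sub_rev]
      _ ≤ (c / k) * (Real.exp m * ‖w - w'‖) := by
          have hck : (0:ℝ) ≤ c / k := (div_pos hc0 hk).le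
          exact mul_le_mul_of_nonneg_left hexp hck
      _ = c * Real.exp m * ‖z - z'‖ := by rw [hnw]; field_simp
  have hzz : z = z' := by
    by_contra hne
    have hpos : 0 < ‖z - z'‖ := norm_sub_pos_iff.2 hne
    have h1m : Real.exp m < 1 := Real.exp_lt_one_iff.2 hm
    have hce : c * Real.exp m < 1 := by nlinarith [Real.exp_pos m]
    have := mul_lt_mul_of_pos_right hce hpos
    rw [one_mul] at this
    linarith
  exact ⟨congrArg Complex.re hzz, congrArg Complex.im hzz⟩

/-- Time-0 Lagrangian flow map `Φ(q,r,s)`. -/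
noncomputable def Phi (k lam : ℝ) (p : Fin 3 → ℝ) : Fin 3 → ℝ :=
  ![p 0 - (1 / k) * Real.exp (k * (p 1 - lam * (p 2) ^ 2)) * Real.sin (k * p 0),
    p 2,
    p 1 + (1 / k) * Real.exp (k * (p 1 - lam * (p 2) ^ 2)) * Real.cos (k * p 0)]

/-- Jacobian matrix of `Phi`. -/
noncomputable def Lmat (k lam : ℝ) (p : Fin 3 → ℝ) : Matrix (Fin 3) (Fin 3) ℝ :=
  !![1 - Real.exp (k * (p 1 - lam * p 2 ^ 2)) * Real.cos (k * p 0),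
      -(Real.exp (k * (p 1 - lam * p 2 ^ 2)) * Real.sin (k * p 0)),
      2 * lam * p 2 * (Real.exp (k * (p 1 - lam * p 2 ^ 2)) * Real.sin (k * p 0));
    0, 0, 1;
    -(Real.exp (k * (p 1 - lam * p 2 ^ 2)) * Real.sin (k * p 0)),
      1 + Real.exp (k * (p 1 - lam * p 2 ^ 2)) * Real.cos (k * p 0),
      -(2 * lam * p 2 * (Real.exp (k * (p 1 - lam * p 2 ^ 2)) * Real.cos (k * p 0)))]

/-- The Jacobian of `Phi` as a continuous linear map. -/
noncomputable def Lclm (k lam : ℝ) (p : Fin 3 → ℝ) : (Fin 3 → ℝ) →L[ℝ] (Fin 3 → ℝ) :=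
  LinearMap.toContinuousLinearMap (Matrix.toLin' (Lmat k lam p))

lemma Lclm_apply (k lam : ℝ) (p v : Fin 3 → ℝ) (i : Fin 3) :
    Lclm k lam p v i = (Lmat k lam p).mulVec v i := by
  simp [Lclm, Matrix.toLin'_apply]

lemma hasFDerivAt_Phi (k lam : ℝ) (hk : k ≠ 0) (p : Fin 3 → ℝ) :
    HasFDerivAt (Phi k lam) (Lclm k lam p) p := by
  rw [hasFDerivAt_pi']
  have h0 := hasFDerivAt_apply (𝕜 := ℝ) (F' := fun _ : Fin 3 => ℝ) 0 p
  have h1 := hasFDerivAt_apply (𝕜 := ℝ) (F' := fun _ : Fin 3 => ℝ) 1 p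
  have h2 := hasFDerivAt_apply (𝕜 := ℝ) (F' := fun _ : Fin 3 => ℝ) 2 p
  have hsq : HasFDerivAt (fun x : Fin 3 → ℝ => x 2 ^ 2)
      (p 2 • ContinuousLinearMap.proj (R := ℝ) (φ := fun _ : Fin 3 => ℝ) 2
        + p 2 • ContinuousLinearMap.proj (R := ℝ) (φ := fun _ : Fin 3 => ℝ) 2) p := by
    exact (h2.mul h2).congr_of_eventuallyEq (Filter.Eventually.of_forall fun x => pow_two (x 2))
  have hu := ((h1.sub (hsq.const_mul lam)).const_mul k)
  have hE := hu.exp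
  have hS := (h0.const_mul k).sin
  have hC := (h0.const_mul k).cos
  have hA := (hE.const_mul (1 / k)).mul hS
  have hB := (hE.const_mul (1 / k)).mul hC
  intro i
  fin_cases i
  · exact (h0.sub hA).congr_fderiv (by
      ext v
      simp [Lclm_apply, Lmat, Matrix.mulVec, dotProduct, Fin.sum_univ_three, Matrix.vecHead, Matrix.vecTail,
        Real.exp_ne_zero]
      field_simp
      ring)
  · exact h2.congr_fderiv (by
      ext v
      simp [Lclm_apply, Lmat, Matrix.mulVec, dotProduct, Fin.sum_univ_three, Matrix.vecHead, Matrix.vecTail])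
  · exact (h1.add hB).congr_fderiv (by
      ext v
      simp [Lclm_apply, Lmat, Matrix.mulVec, dotProduct, Fin.sum_univ_three, Matrix.vecHead, Matrix.vecTail]
      field_simp
      ring)

lemma det_Lclm (k lam : ℝ) (p : Fin 3 → ℝ) (h : k * (p 1 - lam * p 2 ^ 2) < 0) :
    (Lclm k lam p).det ≠ 0 := by
  have hdet : (Lclm k lam p).det = (Lmat k lam p).det := by
    show LinearMap.det _ = _
    unfold Lclm
    rw [LinearMap.coe_toContinuousLinearMap, LinearMap.det_toLin']
  rw [hdet]
  set E := Real.exp (k * (p 1 - lam * p 2 ^ 2)) with hE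
  have hE1 : E < 1 := Real.exp_lt_one_iff.2 h
  have hE0 : 0 < E := Real.exp_pos _
  have : (Lmat k lam p).det = E ^ 2 - 1 := by
    simp [Lmat, Matrix.det_fin_three]
    nlinarith [Real.sin_sq_add_cos_sq (k * p 0)]
  rw [this]
  nlinarith

lemma contDiff_Phi (k lam : ℝ) : ContDiff ℝ (⊤ : ℕ∞) (Phi k lam) := by
  apply contDiff_pi.2
  intro i
  have hx0 : ContDiff ℝ (⊤ : ℕ∞) fun x : Fin 3 → ℝ => x 0 :=
    (ContinuousLinearMap.proj (R := ℝ) (φ := fun _ : Fin 3 => ℝ) 0).contDiff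
  have hx1 : ContDiff ℝ (⊤ : ℕ∞) fun x : Fin 3 → ℝ => x 1 :=
    (ContinuousLinearMap.proj (R := ℝ) (φ := fun _ : Fin 3 => ℝ) 1).contDiff
  have hx2 : ContDiff ℝ (⊤ : ℕ∞) fun x : Fin 3 → ℝ => x 2 :=
    (ContinuousLinearMap.proj (R := ℝ) (φ := fun _ : Fin 3 => ℝ) 2).contDiff
  have hu : ContDiff ℝ (⊤ : ℕ∞) fun x : Fin 3 → ℝ => k * (x 1 - lam * x 2 ^ 2) :=
    contDiff_const.mul (hx1.sub (contDiff_const.mul (hx2.pow 2)))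
  have hE : ContDiff ℝ (⊤ : ℕ∞) fun x : Fin 3 → ℝ => Real.exp (k * (x 1 - lam * x 2 ^ 2)) := hu.exp
  have hS : ContDiff ℝ (⊤ : ℕ∞) fun x : Fin 3 → ℝ => Real.sin (k * x 0) :=
    (contDiff_const.mul hx0).sin
  have hC : ContDiff ℝ (⊤ : ℕ∞) fun x : Fin 3 → ℝ => Real.cos (k * x 0) :=
    (contDiff_const.mul hx0).cos
  fin_cases i
  · exact hx0.sub ((contDiff_const.mul hE).mul hS)
  · exact hx2
  · exact hx1.add ((contDiff_const.mul hE).mul hC)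

/-- for `r₀ ≤ 0`, on the open set `V = {r < r₀}` the map `Φ` is
injective, has everywhere invertible derivative, its image `Φ(V)` is open, and
`Φ` is a homeomorphism from `V` onto `Φ(V)` with smooth inverse: a global
diffeomorphism onto the open set `Φ(V)`. -/
theorem stmt7 (k lam r₀ : ℝ) (hk : 0 < k) (hlam : 0 ≤ lam) (hr₀ : r₀ ≤ 0) :
    IsOpen {p : Fin 3 → ℝ | p 1 < r₀} ∧
    Set.InjOn (Phi k lam) {p : Fin 3 → ℝ | p 1 < r₀} ∧
    (∀ p : Fin 3 → ℝ, p 1 < r₀ →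
      ∃ A : (Fin 3 → ℝ) ≃L[ℝ] (Fin 3 → ℝ),
        HasFDerivAt (Phi k lam) (A : (Fin 3 → ℝ) →L[ℝ] (Fin 3 → ℝ)) p) ∧
    IsOpen (Phi k lam '' {p : Fin 3 → ℝ | p 1 < r₀}) ∧
    ∃ Ψ : (Fin 3 → ℝ) → (Fin 3 → ℝ),
      ContDiffOn ℝ (⊤ : ℕ∞) Ψ (Phi k lam '' {p : Fin 3 → ℝ | p 1 < r₀}) ∧
      (∀ p : Fin 3 → ℝ, p 1 < r₀ → Ψ (Phi k lam p) = p) ∧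
      (∀ y ∈ Phi k lam '' {p : Fin 3 → ℝ | p 1 < r₀}, Phi k lam (Ψ y) = y) := by
  have hVopen : IsOpen {p : Fin 3 → ℝ | p 1 < r₀} :=
    isOpen_lt (continuous_apply 1) continuous_const
  have hneg : ∀ p : Fin 3 → ℝ, p 1 < r₀ → k * (p 1 - lam * p 2 ^ 2) < 0 := by
    intro p hp
    apply mul_neg_of_pos_of_neg hk
    nlinarith [sq_nonneg (p 2)]
  have hA : ∀ p : Fin 3 → ℝ, p 1 < r₀ →
      ∃ A : (Fin 3 → ℝ) ≃L[ℝ] (Fin 3 → ℝ),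
        HasFDerivAt (Phi k lam) (A : (Fin 3 → ℝ) →L[ℝ] (Fin 3 → ℝ)) p := by
    intro p hp
    refine ⟨(Lclm k lam p).toContinuousLinearEquivOfDetNeZero (det_Lclm k lam p (hneg p hp)), ?_⟩
    rw [ContinuousLinearMap.coe_toContinuousLinearEquivOfDetNeZero]
    exact hasFDerivAt_Phi k lam hk.ne' p
  have hinj : Set.InjOn (Phi k lam) {p : Fin 3 → ℝ | p 1 < r₀} := by
    intro p hp p' hp' h
    simp only [Set.mem_setOf_eq] at hp hp'
    have e1 : p 2 = p' 2 := congrFun h 1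
    have e0 : p 0 - 1 / k * Real.exp (k * (p 1 - lam * p 2 ^ 2)) * Real.sin (k * p 0)
        = p' 0 - 1 / k * Real.exp (k * (p' 1 - lam * p' 2 ^ 2)) * Real.sin (k * p' 0) :=
      congrFun h 0
    have e2 : p 1 + 1 / k * Real.exp (k * (p 1 - lam * p 2 ^ 2)) * Real.cos (k * p 0)
        = p' 1 + 1 / k * Real.exp (k * (p' 1 - lam * p' 2 ^ 2)) * Real.cos (k * p' 0) :=
      congrFun h 2
    rw [← e1] at e0 e2
    set c : ℝ := Real.exp (k * (-(lam * p 2 ^ 2))) with hc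
    have key : ∀ r : ℝ, c / k * Real.exp (k * r)
        = 1 / k * Real.exp (k * (r - lam * p 2 ^ 2)) := by
      intro r
      rw [div_mul_eq_mul_div, hc, ← Real.exp_add, div_mul_eq_mul_div, one_mul]
      congr 2
      ring
    rw [← key (p 1), ← key (p' 1)] at e0 e2
    have hc0 : 0 < c := Real.exp_pos _
    have hc1 : c ≤ 1 := by
      rw [hc, Real.exp_le_one_iff]
      nlinarith [sq_nonneg (p 2), mul_nonneg hk.le (mul_nonneg hlam (sq_nonneg (p 2)))]
    have hr : k * p 1 < 0 := mul_neg_of_pos_of_neg hk (lt_of_lt_of_le hp hr₀)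
    have hr' : k * p' 1 < 0 := mul_neg_of_pos_of_neg hk (lt_of_lt_of_le hp' hr₀)
    obtain ⟨hq, hrr⟩ := inj_aux k c hk hc0 hc1 hr hr' e0 e2
    funext i
    fin_cases i
    · exact hq
    · exact hrr
    · exact e1
  have hopen : IsOpen (Phi k lam '' {p : Fin 3 → ℝ | p 1 < r₀}) := by
    rw [isOpen_iff_mem_nhds]
    rintro y ⟨p, hp, rfl⟩
    obtain ⟨A, hA'⟩ := hA p hp
    have hstrict : HasStrictFDerivAt (Phi k lam) (A : (Fin 3 → ℝ) →L[ℝ] (Fin 3 → ℝ)) p :=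
      (contDiff_Phi k lam).contDiffAt.hasStrictFDerivAt' hA' (by simp)
    rw [← hstrict.map_nhds_eq_of_equiv]
    exact Filter.image_mem_map (hVopen.mem_nhds hp)
  refine ⟨hVopen, hinj, hA, hopen,
    Function.invFunOn (Phi k lam) {p : Fin 3 → ℝ | p 1 < r₀}, ?_, ?_, ?_⟩
  · intro y hy
    obtain ⟨p, hp, rfl⟩ := hy
    obtain ⟨A, hA'⟩ := hA p hp
    have hcd : ContDiffAt ℝ (⊤ : ℕ∞) (Phi k lam) p := (contDiff_Phi k lam).contDiffAt
    have hstrict : HasStrictFDerivAt (Phi k lam) (A : (Fin 3 → ℝ) →L[ℝ] (Fin 3 → ℝ)) p :=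
      hcd.hasStrictFDerivAt' hA' (by simp)
    set g := hstrict.localInverse (Phi k lam) A p with hg
    have hgs : ContDiffAt ℝ (⊤ : ℕ∞) g (Phi k lam p) := hcd.to_localInverse hA' (by simp)
    have hleft : g (Phi k lam p) = p := hstrict.localInverse_apply_image
    have hright := hstrict.eventually_right_inverse
    have hcont := hstrict.localInverse_continuousAt
    have hmemV : ∀ᶠ y' in nhds (Phi k lam p), g y' ∈ {p : Fin 3 → ℝ | p 1 < r₀} := by
      have hmem : {p : Fin 3 → ℝ | p 1 < r₀} ∈ nhds (g (Phi k lam p)) := by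
        rw [hleft]; exact hVopen.mem_nhds hp
      exact hcont hmem
    have hEv : (Function.invFunOn (Phi k lam) {p : Fin 3 → ℝ | p 1 < r₀})
        =ᶠ[nhds (Phi k lam p)] g := by
      filter_upwards [hright, hmemV] with y' h1 h2
      have hmem := Function.invFunOn_mem (f := Phi k lam)
        (s := {p : Fin 3 → ℝ | p 1 < r₀}) ⟨g y', h2, h1⟩
      have happ := Function.invFunOn_eq (f := Phi k lam)
        (s := {p : Fin 3 → ℝ | p 1 < r₀}) ⟨g y', h2, h1⟩
      exact hinj hmem h2 (happ.trans h1.symm)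
    exact ((hgs.congr_of_eventuallyEq hEv).contDiffWithinAt)
  · intro p hp
    exact hinj.leftInvOn_invFunOn hp
  · rintro y ⟨p, hp, rfl⟩
    exact Function.invFunOn_eq ⟨p, hp, rfl⟩
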